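/- arXiv:1505.05188 — 2 statements merged into one kernel-verified Lean document; each statement's English description precedes it below -/
import Mathlib

section
/- Let U, V, W be nonempty compact subsets of ℂ and suppose that every operator in M₊(U,V,W) is invertible (equivalently, one operator in PE₊(U,V,W) is invertible). Then every finite tridiagonal matrix over U, V, W, i.e. every F ∈ M_fin(U,V,W), is invertible. -/
open scoped ENNReal

noncomputable section

/-- The sequence space `ℓᵖ(ℤ)` (complex valued). -/
abbrev SeqZ (p : ℝ≥0∞) : Type := lp (fun _ : ℤ => ℂ) p
/-- The sequence space `ℓᵖ(ℕ)` (complex valued). -/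
abbrev SeqN (p : ℝ≥0∞) : Type := lp (fun _ : ℕ => ℂ) p

/-- The three diagonals take values in `U`, `V`, `W` respectively. -/
def RangesIn (U V W : Set ℂ) {ι : Type*} (u v w : ι → ℂ) : Prop :=
  (∀ i, u i ∈ U) ∧ (∀ i, v i ∈ V) ∧ (∀ i, w i ∈ W)

/-- `A` acts on `ℓᵖ(ℤ)` as the bi-infinite tridiagonal matrix with subdiagonal `u`
(entries `a_{i,i-1} = u i`), main diagonal `v` and superdiagonal `w` (`a_{i,i+1} = w i`). -/
def BiActs {p : ℝ≥0∞} [Fact (1 ≤ p)] (A : SeqZ p →L[ℂ] SeqZ p) (u v w : ℤ → ℂ) : Prop :=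
  ∀ (x : SeqZ p) (i : ℤ),
    (A x : ∀ _ : ℤ, ℂ) i =
      u i * (x : ∀ _ : ℤ, ℂ) (i - 1) + v i * (x : ∀ _ : ℤ, ℂ) i +
        w i * (x : ∀ _ : ℤ, ℂ) (i + 1)

/-- `A` acts on `ℓᵖ(ℕ)` as the semi-infinite tridiagonal matrix with subdiagonal `u`
(entries `a_{i,i-1} = u i` for `i ≥ 1`), main diagonal `v` and superdiagonal `w`. -/
def SemiActs {p : ℝ≥0∞} [Fact (1 ≤ p)] (A : SeqN p →L[ℂ] SeqN p) (u v w : ℕ → ℂ) : Prop :=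
  ∀ (x : SeqN p) (i : ℕ),
    (A x : ∀ _ : ℕ, ℂ) i =
      (if i = 0 then 0 else u i * (x : ∀ _ : ℕ, ℂ) (i - 1)) + v i * (x : ∀ _ : ℕ, ℂ) i +
        w i * (x : ∀ _ : ℕ, ℂ) (i + 1)

/-- membership in `M(U,V,W)`: bi-infinite tridiagonal operators over `(U,V,W)`. -/
def MemM (U V W : Set ℂ) {p : ℝ≥0∞} [Fact (1 ≤ p)] (A : SeqZ p →L[ℂ] SeqZ p) : Prop :=
  ∃ u v w : ℤ → ℂ, RangesIn U V W u v w ∧ BiActs A u v w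

/-- membership in `M₊(U,V,W)`: semi-infinite tridiagonal operators over `(U,V,W)`. -/
def MemMPlus (U V W : Set ℂ) {p : ℝ≥0∞} [Fact (1 ≤ p)] (A : SeqN p →L[ℂ] SeqN p) : Prop :=
  ∃ u v w : ℕ → ℂ, RangesIn U V W u v w ∧ SemiActs A u v w

/-- pseudoergodicity of bi-infinite diagonal data: every finite pattern of diagonals over
`(U,V,W)` is reproduced to arbitrary accuracy somewhere along the diagonals. -/
def PseudoergodicZ (U V W : Set ℂ) (u v w : ℤ → ℂ) : Prop :=
  ∀ (n : ℕ) (bu bv bw : Fin n → ℂ), RangesIn U V W bu bv bw →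
    ∀ ε : ℝ, 0 < ε → ∃ k : ℤ, ∀ i : Fin n,
      ‖u (k + (i : ℕ)) - bu i‖ < ε ∧ ‖v (k + (i : ℕ)) - bv i‖ < ε ∧
        ‖w (k + (i : ℕ)) - bw i‖ < ε

/-- pseudoergodicity of semi-infinite diagonal data. -/
def PseudoergodicN (U V W : Set ℂ) (u v w : ℕ → ℂ) : Prop :=
  ∀ (n : ℕ) (bu bv bw : Fin n → ℂ), RangesIn U V W bu bv bw →
    ∀ ε : ℝ, 0 < ε → ∃ k : ℕ, ∀ i : Fin n,
      ‖u (k + (i : ℕ)) - bu i‖ < ε ∧ ‖v (k + (i : ℕ)) - bv i‖ < ε ∧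
        ‖w (k + (i : ℕ)) - bw i‖ < ε

/-- membership in `PE(U,V,W)`: pseudoergodic bi-infinite operators. -/
def MemPE (U V W : Set ℂ) {p : ℝ≥0∞} [Fact (1 ≤ p)] (A : SeqZ p →L[ℂ] SeqZ p) : Prop :=
  ∃ u v w : ℤ → ℂ, RangesIn U V W u v w ∧ PseudoergodicZ U V W u v w ∧ BiActs A u v w

/-- membership in `PE₊(U,V,W)`: pseudoergodic semi-infinite operators. -/
def MemPEPlus (U V W : Set ℂ) {p : ℝ≥0∞} [Fact (1 ≤ p)] (A : SeqN p →L[ℂ] SeqN p) : Prop :=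
  ∃ u v w : ℕ → ℂ, RangesIn U V W u v w ∧ PseudoergodicN U V W u v w ∧ SemiActs A u v w

/-- `(U,V,W)` is compatible: every operator in `M(U,V,W)` is invertible on `ℓᵖ(ℤ)`
for every `p ∈ [1,∞]`. -/
def Compatible (U V W : Set ℂ) : Prop :=
  ∀ (p : ℝ≥0∞) [Fact (1 ≤ p)], ∀ A : SeqZ p →L[ℂ] SeqZ p, MemM U V W A → IsUnit A

/-- `α(A)`: the dimension of the kernel. -/
def alphaDim {E : Type*} [NormedAddCommGroup E] [NormedSpace ℂ E] (A : E →L[ℂ] E) : ℕ :=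
  Module.finrank ℂ (LinearMap.ker (A : E →ₗ[ℂ] E))

/-- `β(A)`: the codimension of the range. -/
def betaDim {E : Type*} [NormedAddCommGroup E] [NormedSpace ℂ E] (A : E →L[ℂ] E) : ℕ :=
  Module.finrank ℂ (E ⧸ LinearMap.range (A : E →ₗ[ℂ] E))

/-- `A` is a Fredholm operator: finite-dimensional kernel and finite-codimensional range. -/
def IsFredholmOp {E : Type*} [NormedAddCommGroup E] [NormedSpace ℂ E] (A : E →L[ℂ] E) : Prop :=
  FiniteDimensional ℂ (LinearMap.ker (A : E →ₗ[ℂ] E)) ∧ FiniteDimensional ℂ (E ⧸ LinearMap.range (A : E →ₗ[ℂ] E))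

/-- the Fredholm index `ind A = α(A) - β(A)`. -/
def fredIndex {E : Type*} [NormedAddCommGroup E] [NormedSpace ℂ E] (A : E →L[ℂ] E) : ℤ :=
  (alphaDim A : ℤ) - (betaDim A : ℤ)

/-- `(U,V,W)` is compatible and the common Fredholm index `κ(U,V,W)` of the semi-infinite
operators in `M₊(U,V,W)` equals `k`. -/
def KappaIs (U V W : Set ℂ) (k : ℤ) : Prop :=
  Compatible U V W ∧
    ∀ (p : ℝ≥0∞) [Fact (1 ≤ p)], ∀ B : SeqN p →L[ℂ] SeqN p, MemMPlus U V W B →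
      IsFredholmOp B ∧ fredIndex B = k

/-- union of the `ℓᵖ`-spectra of all operators in `M(U,V,W)`, at exponent `p`. -/
def specSetZAt (U V W : Set ℂ) (p : ℝ≥0∞) [Fact (1 ≤ p)] : Set ℂ :=
  {lam | ∃ C : SeqZ p →L[ℂ] SeqZ p, MemM U V W C ∧ lam ∈ spectrum ℂ C}

/-- union of the `ℓᵖ`-spectra of all operators in `M₊(U,V,W)`, at exponent `p`. -/
def specSetNAt (U V W : Set ℂ) (p : ℝ≥0∞) [Fact (1 ≤ p)] : Set ℂ :=
  {lam | ∃ C : SeqN p →L[ℂ] SeqN p, MemMPlus U V W C ∧ lam ∈ spectrum ℂ C}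

/-- `Σ(U,V,W)`: the union of the spectra of all operators in `M(U,V,W)`. -/
def SigmaSet (U V W : Set ℂ) : Set ℂ :=
  ⋃ (p : ℝ≥0∞), ⋃ (h : Fact (1 ≤ p)), @specSetZAt U V W p h

/-- `Σ₊(U,V,W)`: the union of the spectra of all operators in `M₊(U,V,W)`. -/
def SigmaPlusSet (U V W : Set ℂ) : Set ℂ :=
  ⋃ (p : ℝ≥0∞), ⋃ (h : Fact (1 ≤ p)), @specSetNAt U V W p h

/-- `V - λ`. -/
def shiftSet (V : Set ℂ) (lam : ℂ) : Set ℂ := (fun v => v - lam) '' V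

/-- `Σ_k(U,V,W) = {λ : (U, V-λ, W) compatible with κ(U, V-λ, W) = k}`. -/
def SigmaK (U V W : Set ℂ) (k : ℤ) : Set ℂ := {lam | KappaIs U (shiftSet V lam) W k}

/-- `Σ_{±1} = Σ_{-1} ∪ Σ_1`. -/
def SigmaPM (U V W : Set ℂ) : Set ℂ := SigmaK U V W (-1) ∪ SigmaK U V W 1

/-- the ellipse `E(u,v,w) = {u t + v + w/t : |t| = 1}`. -/
def ellipse (u v w : ℂ) : Set ℂ := (fun t : ℂ => u * t + v + w / t) '' {t : ℂ | ‖t‖ = 1}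

open Polynomial in
open Classical in
/-- winding number of the loop `t ↦ u t + v + w/t` (`t` on the unit circle, traversed
counter-clockwise) around `lam`, computed, via the argument principle, as the number of
roots (with multiplicity) of `u t² + (v - λ) t + w` in the open unit disk minus the order
of the pole at `0`.  (Valid whenever `lam` does not lie on the ellipse itself.) -/
def windingAt (u v w lam : ℂ) : ℤ :=
  (((C u * X ^ 2 + C (v - lam) * X + C w).roots.filter (fun z => ‖z‖ < 1)).card : ℤ) - 1

/-- `lam` lies inside the oriented ellipse `E(u,v,w)`: not on it, nonzero winding number. -/
def insideEllipse (u v w lam : ℂ) : Prop :=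
  lam ∉ ellipse u v w ∧ windingAt u v w lam ≠ 0

/-- `E_∩`: points inside all the ellipses `E(u,v,w)`, `(u,v,w) ∈ U × V × W`. -/
def Ecap (U V W : Set ℂ) : Set ℂ :=
  {lam | ∀ u ∈ U, ∀ v ∈ V, ∀ w ∈ W, insideEllipse u v w lam}

/-- `E₁`: points of `E_∩` circumnavigated clockwise (winding number `-1`) by all ellipses. -/
def Eone (U V W : Set ℂ) : Set ℂ :=
  {lam ∈ Ecap U V W | ∀ u ∈ U, ∀ v ∈ V, ∀ w ∈ W, windingAt u v w lam = -1}

/-- `E_{-1}`: points of `E_∩` circumnavigated counter-clockwise (winding number `1`). -/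
def EmOne (U V W : Set ℂ) : Set ℂ :=
  {lam ∈ Ecap U V W | ∀ u ∈ U, ∀ v ∈ V, ∀ w ∈ W, windingAt u v w lam = 1}

/-- `E_{±1} = E_{-1} ∪ E₁`. -/
def Epm (U V W : Set ℂ) : Set ℂ := EmOne U V W ∪ Eone U V W

/-- `E_∪`: the union of the filled ellipses. -/
def Ecup (U V W : Set ℂ) : Set ℂ :=
  ⋃ (u ∈ U) (v ∈ V) (w ∈ W), convexHull ℝ (ellipse u v w)

/-- `sup` of moduli over a set, e.g. `u^* = max_{u ∈ U} |u|`. -/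
def supAbs (S : Set ℂ) : ℝ := sSup ((fun z : ℂ => ‖z‖) '' S)

/-- `inf` of moduli over a set, e.g. `u_* = min_{u ∈ U} |u|`. -/
def infAbs (S : Set ℂ) : ℝ := sInf ((fun z : ℂ => ‖z‖) '' S)

/-- `M_p = sup_{B ∈ M(U,V,W)} ‖B‖_p`. -/
def Mnorm (U V W : Set ℂ) (p : ℝ≥0∞) [Fact (1 ≤ p)] : ℝ :=
  sSup {x : ℝ | ∃ B : SeqZ p →L[ℂ] SeqZ p, MemM U V W B ∧ x = ‖B‖}

/-- `N_p = sup_{B ∈ M(U,V,W)} ‖B⁻¹‖_p`. -/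
def Nnorm (U V W : Set ℂ) (p : ℝ≥0∞) [Fact (1 ≤ p)] : ℝ :=
  sSup {x : ℝ | ∃ B : SeqZ p →L[ℂ] SeqZ p, MemM U V W B ∧ x = ‖Ring.inverse B‖}

/-- `M_{+,p} = sup_{B₊ ∈ M₊(U,V,W)} ‖B₊‖_p`. -/
def MnormPlus (U V W : Set ℂ) (p : ℝ≥0∞) [Fact (1 ≤ p)] : ℝ :=
  sSup {x : ℝ | ∃ B : SeqN p →L[ℂ] SeqN p, MemMPlus U V W B ∧ x = ‖B‖}

/-- `N_{+,p} = sup_{B₊ ∈ M₊(U,V,W)} ‖B₊⁻¹‖_p`. -/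
def NnormPlus (U V W : Set ℂ) (p : ℝ≥0∞) [Fact (1 ≤ p)] : ℝ :=
  sSup {x : ℝ | ∃ B : SeqN p →L[ℂ] SeqN p, MemMPlus U V W B ∧ x = ‖Ring.inverse B‖}

/-- `p` is favourable for `(U,V,W)`: `‖A₊⁻¹‖_p = N_{+,p} = N_p` for all `A₊ ∈ PE₊(U,V,W)`. -/
def Favourable (U V W : Set ℂ) (p : ℝ≥0∞) [Fact (1 ≤ p)] : Prop :=
  ∀ A : SeqN p →L[ℂ] SeqN p, MemPEPlus U V W A →
    ‖Ring.inverse A‖ = NnormPlus U V W p ∧ NnormPlus U V W p = Nnorm U V W p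

/-- the `n × n` tridiagonal matrix with diagonals `u` (sub), `v` (main), `w` (super). -/
def JacobiMatrix {n : ℕ} (u v w : Fin n → ℂ) : Matrix (Fin n) (Fin n) ℂ :=
  fun i j =>
    if ((i : ℕ) : ℤ) = ((j : ℕ) : ℤ) + 1 then u i
    else if i = j then v i
    else if ((j : ℕ) : ℤ) = ((i : ℕ) : ℤ) + 1 then w i
    else 0

/-- the `ℓᵖ` norm of a finite complex vector. -/
def pVecNorm (p : ℝ≥0∞) [Fact (1 ≤ p)] {n : ℕ} (x : Fin n → ℂ) : ℝ :=
  ‖(WithLp.equiv p (Fin n → ℂ)).symm x‖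

/-- the operator norm of an `n × n` matrix acting on `(ℂⁿ, ‖·‖_p)`. -/
def matOpNorm (p : ℝ≥0∞) [Fact (1 ≤ p)] {n : ℕ} (F : Matrix (Fin n) (Fin n) ℂ) : ℝ :=
  sInf {c : ℝ | 0 ≤ c ∧ ∀ x : Fin n → ℂ, pVecNorm p (F.mulVec x) ≤ c * pVecNorm p x}

/-- the `p`-operator norm of the inverse matrix. -/
def matInvNorm (p : ℝ≥0∞) [Fact (1 ≤ p)] {n : ℕ} (F : Matrix (Fin n) (Fin n) ℂ) : ℝ :=
  matOpNorm p F⁻¹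

/-- `M_{n,p}`: sup of the `p`-norms of the `n × n` tridiagonal matrices over `(U,V,W)`. -/
def MnormFinN (U V W : Set ℂ) (p : ℝ≥0∞) [Fact (1 ≤ p)] (n : ℕ) : ℝ :=
  sSup {x : ℝ | ∃ u v w : Fin n → ℂ, RangesIn U V W u v w ∧
    x = matOpNorm p (JacobiMatrix u v w)}

/-- `M_{fin,p}`: sup of the `p`-norms of all finite tridiagonal matrices over `(U,V,W)`. -/
def MnormFin (U V W : Set ℂ) (p : ℝ≥0∞) [Fact (1 ≤ p)] : ℝ :=
  sSup {x : ℝ | ∃ (n : ℕ) (u v w : Fin n → ℂ), RangesIn U V W u v w ∧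
    x = matOpNorm p (JacobiMatrix u v w)}

/-- `N_{fin,p}`: sup of the `p`-norms of the inverses of all finite tridiagonal matrices. -/
def NnormFin (U V W : Set ℂ) (p : ℝ≥0∞) [Fact (1 ≤ p)] : ℝ :=
  sSup {x : ℝ | ∃ (n : ℕ) (u v w : Fin n → ℂ), RangesIn U V W u v w ∧
    x = matInvNorm p (JacobiMatrix u v w)}

/-- entry `(i,j)` of the bi-infinite tridiagonal matrix with diagonals `u`, `v`, `w`. -/
def secEntryZ (u v w : ℤ → ℂ) (i j : ℤ) : ℂ :=
  if i = j + 1 then u i else if i = j then v i else if j = i + 1 then w i else 0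

/-- the finite section `(a_{ij})_{i,j=l}^{r}` of the bi-infinite tridiagonal matrix. -/
def finSecZ (u v w : ℤ → ℂ) (l r : ℤ) :
    Matrix (Fin (r + 1 - l).toNat) (Fin (r + 1 - l).toNat) ℂ :=
  fun i j => secEntryZ u v w (l + (i : ℕ)) (l + (j : ℕ))

/-- entry `(i,j)` of the semi-infinite tridiagonal matrix with diagonals `u`, `v`, `w`. -/
def secEntryN (u v w : ℕ → ℂ) (i j : ℕ) : ℂ :=
  if i = j + 1 then u i else if i = j then v i else if j = i + 1 then w i else 0

/-- the `n`-th finite section (first `n` rows and columns) of the semi-infinite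
tridiagonal matrix with diagonals `u`, `v`, `w`. -/
def finSecN (u v w : ℕ → ℂ) (n : ℕ) : Matrix (Fin n) (Fin n) ℂ :=
  fun i j => secEntryN u v w i j

/-- stability of the sequence of finite sections of a bi-infinite tridiagonal matrix with
cut-off sequences `l`, `r`: eventually invertible with uniformly bounded inverses. -/
def StableSecsZ (p : ℝ≥0∞) [Fact (1 ≤ p)] (u v w : ℤ → ℂ) (l r : ℕ → ℤ) : Prop :=
  ∃ (n₀ : ℕ) (c : ℝ), ∀ n, n₀ ≤ n →
    IsUnit (finSecZ u v w (l n) (r n)) ∧ matInvNorm p (finSecZ u v w (l n) (r n)) ≤ c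

/-- stability of the sequence of finite sections of a semi-infinite tridiagonal matrix. -/
def StableSecsN (p : ℝ≥0∞) [Fact (1 ≤ p)] (u v w : ℕ → ℂ) (r : ℕ → ℕ) : Prop :=
  ∃ (n₀ : ℕ) (c : ℝ), ∀ n, n₀ ≤ n →
    IsUnit (finSecN u v w (r n)) ∧ matInvNorm p (finSecN u v w (r n)) ≤ c

/-- the full finite section method applies to every operator in `M(U,V,W)`:
the operator is invertible and the finite sections `(a_{ij})_{i,j=-n}^{n}` are stable. -/
def FullFSMAppliesZ (U V W : Set ℂ) : Prop :=
  ∀ (p : ℝ≥0∞) [Fact (1 ≤ p)], ∀ u v w : ℤ → ℂ, RangesIn U V W u v w →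
    ∀ A : SeqZ p →L[ℂ] SeqZ p, BiActs A u v w →
      IsUnit A ∧ StableSecsZ p u v w (fun n => -(n : ℤ)) (fun n => (n : ℤ))

/-- the full finite section method applies to every operator in `M₊(U,V,W)`:
the operator is invertible and the finite sections `(a_{ij})_{i,j=1}^{n}` are stable. -/
def FullFSMAppliesN (U V W : Set ℂ) : Prop :=
  ∀ (p : ℝ≥0∞) [Fact (1 ≤ p)], ∀ u v w : ℕ → ℂ, RangesIn U V W u v w →
    ∀ A : SeqN p →L[ℂ] SeqN p, SemiActs A u v w →
      IsUnit A ∧ StableSecsN p u v w (fun n => n)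

/-- one operator in `PE₊(U,V,W)` is invertible (on some, equivalently each, `ℓᵖ(ℕ)`). -/
def PEPlusInvAt (U V W : Set ℂ) (p : ℝ≥0∞) [Fact (1 ≤ p)] : Prop :=
  ∃ B : SeqN p →L[ℂ] SeqN p, MemPEPlus U V W B ∧ IsUnit B

def ExistsInvPEPlus (U V W : Set ℂ) : Prop :=
  ∃ (p : ℝ≥0∞) (h : Fact (1 ≤ p)), @PEPlusInvAt U V W p h

/-- one operator in `PE₊(U,V,W)` is Fredholm of index `0`. -/
def PEPlusFred0At (U V W : Set ℂ) (p : ℝ≥0∞) [Fact (1 ≤ p)] : Prop :=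
  ∃ B : SeqN p →L[ℂ] SeqN p, MemPEPlus U V W B ∧ IsFredholmOp B ∧ fredIndex B = 0

def ExistsFred0PEPlus (U V W : Set ℂ) : Prop :=
  ∃ (p : ℝ≥0∞) (h : Fact (1 ≤ p)), @PEPlusFred0At U V W p h

/-- all operators in `M₊(U,V,W)` are invertible (on every `ℓᵖ(ℕ)`). -/
def AllMPlusInv (U V W : Set ℂ) : Prop :=
  ∀ (p : ℝ≥0∞) [Fact (1 ≤ p)], ∀ B : SeqN p →L[ℂ] SeqN p, MemMPlus U V W B → IsUnit B

/-- the `ε`-pseudospectrum of a bounded operator (the spectrum together with the points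
where the resolvent has norm `> 1/ε`). -/
def pspec {E : Type*} [NormedAddCommGroup E] [NormedSpace ℂ E] (ε : ℝ)
    (A : E →L[ℂ] E) : Set ℂ :=
  {lam | ¬IsUnit (A - lam • (1 : E →L[ℂ] E)) ∨
    1 / ε < ‖Ring.inverse (A - lam • (1 : E →L[ℂ] E))‖}

/-- the `ε`-pseudospectrum of an `n × n` matrix, in the `p`-operator norm. -/
def pspecMat (p : ℝ≥0∞) [Fact (1 ≤ p)] {n : ℕ} (ε : ℝ) (F : Matrix (Fin n) (Fin n) ℂ) :
    Set ℂ :=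
  {lam | ¬IsUnit (F - lam • (1 : Matrix (Fin n) (Fin n) ℂ)) ∨
    1 / ε < matInvNorm p (F - lam • (1 : Matrix (Fin n) (Fin n) ℂ))}

/-- `Σ_ε^p`: union of the `ε`-pseudospectra of all operators in `M(U,V,W)`. -/
def SigmaEps (U V W : Set ℂ) (p : ℝ≥0∞) [Fact (1 ≤ p)] (ε : ℝ) : Set ℂ :=
  {lam | ∃ B : SeqZ p →L[ℂ] SeqZ p, MemM U V W B ∧ lam ∈ pspec ε B}

/-- `Σ_{+,ε}^p`: union of the `ε`-pseudospectra of all operators in `M₊(U,V,W)`. -/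
def SigmaPlusEps (U V W : Set ℂ) (p : ℝ≥0∞) [Fact (1 ≤ p)] (ε : ℝ) : Set ℂ :=
  {lam | ∃ B : SeqN p →L[ℂ] SeqN p, MemMPlus U V W B ∧ lam ∈ pspec ε B}

/-- `p` is favourable for all the (compatible, index zero) shifted triples `(U, V-λ, W)`. -/
def FavAll (U V W : Set ℂ) (p : ℝ≥0∞) [Fact (1 ≤ p)] : Prop :=
  ∀ lam : ℂ, KappaIs U (shiftSet V lam) W 0 → Favourable U (shiftSet V lam) W p

end

/-!
Let `x ≠ 0` be a null vector of a finite tridiagonal matrix `F` over `(U,V,W)`. Repeat `F` along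
the diagonal of a semi-infinite matrix, joining consecutive copies by a row whose sub- and
superdiagonal entries are some `a ∈ U`, `c ∈ W`. The sequence `(x, 0, ρ x, 0, ρ² x, 0, …)` is
then a null sequence of this operator in `M₊(U,V,W)` as soon as `a x_last + c ρ x_first = 0`.
If `‖ρ‖ ≤ 1` it is bounded, so the operator is not injective on `ℓ^∞`. Otherwise do the same
with the reversed transpose of `F`, whose null vector is `x` reversed: the factor becomes `ρ⁻¹`,
the null sequence is summable, and it is a left null sequence of an operator in `M₊(U,V,W)`,
which therefore is not surjective on `ℓ^∞`. If `0 ∈ U` (resp. `0 ∈ W`), choosing `a = 0`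
(resp. `c = 0`) makes the factor of the first (resp. second) construction zero; otherwise all
off-diagonal entries of `F` are nonzero, so the recurrence `F x = 0` forces
`x_first ≠ 0 ≠ x_last` and `ρ` can be solved for.
-/

def tridiagRow (u v w y : ℕ → ℂ) (i : ℕ) : ℂ :=
  (if i = 0 then 0 else u i * y (i - 1)) + v i * y i + w i * y (i + 1)

def finExtend {n : ℕ} (f : Fin n → ℂ) (d : ℂ) (i : ℕ) : ℂ :=
  if h : i < n then f ⟨i, h⟩ else d

theorem finExtend_of_lt {n : ℕ} (f : Fin n → ℂ) (d : ℂ) {i : ℕ} (h : i < n) :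
    finExtend f d i = f ⟨i, h⟩ := dif_pos h

theorem finExtend_of_le {n : ℕ} (f : Fin n → ℂ) (d : ℂ) {i : ℕ} (h : n ≤ i) :
    finExtend f d i = d := dif_neg (by omega)

theorem finExtend_mem {n : ℕ} {f : Fin n → ℂ} {d : ℂ} {s : Set ℂ} (hf : ∀ i, f i ∈ s)
    (hd : d ∈ s) (i : ℕ) : finExtend f d i ∈ s := by
  unfold finExtend; split_ifs <;> simp [hf, hd]

theorem norm_finExtend_zero_le {n : ℕ} (f : Fin n → ℂ) (i : ℕ) : ‖finExtend f 0 i‖ ≤ ‖f‖ := by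
  unfold finExtend; split_ifs
  · exact norm_le_pi_norm f _
  · simp

theorem jacobiMatrix_mulVec_apply {n : ℕ} (u v w x : Fin n → ℂ) (a b c : ℂ) (r : Fin n) :
    (JacobiMatrix u v w).mulVec x r =
      tridiagRow (finExtend u a) (finExtend v b) (finExtend w c) (finExtend x 0) r := by
  obtain ⟨r, hr⟩ := r
  have hterm : ∀ j : Fin n, JacobiMatrix u v w ⟨r, hr⟩ j * x j =
      (if (j : ℕ) + 1 = r then finExtend u a r * finExtend x 0 j else 0) +
      (if (j : ℕ) = r then finExtend v b r * finExtend x 0 j else 0) +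
      (if (j : ℕ) = r + 1 then finExtend w c r * finExtend x 0 j else 0) := by
    rintro ⟨j, hj⟩
    simp only [JacobiMatrix, finExtend_of_lt _ _ hr, finExtend_of_lt _ _ hj, Fin.mk.injEq]
    split_ifs <;> first | omega | ring
  rw [Matrix.mulVec, dotProduct, Finset.sum_congr rfl fun j _ => hterm j,
    Fin.sum_univ_eq_sum_range (fun j =>
      (if j + 1 = r then finExtend u a r * finExtend x 0 j else 0) +
      (if j = r then finExtend v b r * finExtend x 0 j else 0) +
      (if j = r + 1 then finExtend w c r * finExtend x 0 j else 0)) n]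
  have hsuper : (if r + 1 < n then finExtend w c r * finExtend x 0 (r + 1) else 0) =
      finExtend w c r * finExtend x 0 (r + 1) := by
    split_ifs with h
    · rfl
    · rw [finExtend_of_le _ _ (not_lt.1 h), mul_zero]
  simp only [Finset.sum_add_distrib, Finset.sum_ite_eq', Finset.mem_range, hr, if_true, hsuper,
    tridiagRow]
  congr 2
  rcases r with _ | r
  · simp
  · simp only [Nat.add_right_cancel_iff, Finset.sum_ite_eq', Finset.mem_range]
    simp [(Nat.lt_succ_self r).trans hr]

theorem jacobiMatrix_rev {n : ℕ} (u v w : Fin n → ℂ) :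
    JacobiMatrix (w ∘ Fin.rev) (v ∘ Fin.rev) (u ∘ Fin.rev) =
      (JacobiMatrix u v w).submatrix Fin.rev Fin.rev := by
  ext i j
  simp only [JacobiMatrix, Matrix.submatrix_apply, Function.comp_apply, Fin.rev_inj, Fin.val_rev]
  split_ifs <;> first | omega | rfl

theorem jacobiMatrix_rev_mulVec_rev {n : ℕ} {u v w x : Fin n → ℂ}
    (hker : (JacobiMatrix u v w).mulVec x = 0) :
    (JacobiMatrix (w ∘ Fin.rev) (v ∘ Fin.rev) (u ∘ Fin.rev)).mulVec (x ∘ Fin.rev) = 0 := by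
  rw [jacobiMatrix_rev, show (Fin.rev : Fin n → Fin n) = Fin.revPerm from rfl,
    Matrix.submatrix_mulVec_equiv]
  ext i
  simp [Function.comp_def, hker]

theorem eq_zero_of_tridiagRow_eq_zero_of_head_eq_zero {n : ℕ} {u v w y : ℕ → ℂ}
    (hw : ∀ i < n, w i ≠ 0) (hrow : ∀ i < n, tridiagRow u v w y i = 0) (h0 : y 0 = 0) :
    ∀ i ≤ n, y i = 0 := by
  intro i
  induction i using Nat.strong_induction_on with
  | _ i ih =>
    rcases i with _ | k
    · exact fun _ => h0
    intro hk
    have hrowk := hrow k hk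
    rw [tridiagRow, ih k (by omega) (by omega), ih (k - 1) (by omega) (by omega)] at hrowk
    simpa [hw k hk] using hrowk

theorem head_ne_zero_of_jacobiMatrix_mulVec_eq_zero {n : ℕ} {u v w x : Fin (n + 1) → ℂ}
    (hw : ∀ i, w i ≠ 0) (hker : (JacobiMatrix u v w).mulVec x = 0) (hx : x ≠ 0) : x 0 ≠ 0 := by
  intro h0
  apply hx
  funext ⟨i, hi⟩
  have hrow : ∀ r < n + 1, tridiagRow (finExtend u 0) (finExtend v 0) (finExtend w 0)
      (finExtend x 0) r = 0 := fun r hr => by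
    rw [← jacobiMatrix_mulVec_apply u v w x 0 0 0 ⟨r, hr⟩, hker, Pi.zero_apply]
  have := eq_zero_of_tridiagRow_eq_zero_of_head_eq_zero
    (fun r hr => by rw [finExtend_of_lt _ _ hr]; exact hw _) hrow
    (by rwa [finExtend_of_lt _ _ n.succ_pos]) i hi.le
  rwa [finExtend_of_lt _ _ hi] at this

/-- Row `(n + 1) k + r` of the periodic extension is `ρ ^ k` times row `r` of the block; row `n`
is the junction row. -/
theorem tridiagRow_periodic {n : ℕ} (hn : 0 < n) {S D T X : ℕ → ℂ} {ρ : ℂ}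
    (hrow : ∀ r < n, tridiagRow S D T X r = 0) (hXn : X n = 0)
    (hjunction : S n * X (n - 1) + T n * (ρ * X 0) = 0) (i : ℕ) :
    tridiagRow (fun i => S (i % (n + 1))) (fun i => D (i % (n + 1)))
      (fun i => T (i % (n + 1))) (fun i => ρ ^ (i / (n + 1)) * X (i % (n + 1))) i = 0 := by
  set N := n + 1 with hN
  have hdm : ∀ k r, r < N → (N * k + r) / N = k ∧ (N * k + r) % N = r := fun k r hr =>
    ⟨by rw [Nat.mul_add_div (by omega), Nat.div_eq_of_lt hr, add_zero],
      by rw [Nat.mul_add_mod, Nat.mod_eq_of_lt hr]⟩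
  obtain ⟨k, r, hr, rfl⟩ : ∃ k r, r < N ∧ i = N * k + r :=
    ⟨i / N, i % N, Nat.mod_lt _ (by omega), (Nat.div_add_mod i N).symm⟩
  simp only [tridiagRow, (hdm k r hr).1, (hdm k r hr).2]
  rcases Nat.lt_or_ge r n with hrn | hrn
  · have hsub : (if N * k + r = 0 then 0 else
          S r * (ρ ^ ((N * k + r - 1) / N) * X ((N * k + r - 1) % N))) =
        ρ ^ k * (if r = 0 then 0 else S r * X (r - 1)) := by
      rcases Nat.eq_zero_or_pos r with rfl | hr0
      · rcases k with _ | k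
        · simp
        · have : N * (k + 1) + 0 - 1 = N * k + n := by rw [hN]; ring_nf; omega
          rw [if_neg (by omega), this, (hdm k n (by omega)).2, hXn]
          simp
      · have : N * k + r - 1 = N * k + (r - 1) := by omega
        rw [if_neg (by omega), if_neg (by omega), this, (hdm k (r - 1) (by omega)).1,
          (hdm k (r - 1) (by omega)).2]
        ring
    rw [hsub, show N * k + r + 1 = N * k + (r + 1) by ring, (hdm k (r + 1) (by omega)).1,
      (hdm k (r + 1) (by omega)).2]
    have hrowr := hrow r hrn
    rw [tridiagRow] at hrowr
    linear_combination ρ ^ k * hrowr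
  · obtain rfl : r = n := by omega
    rw [if_neg (by omega), show N * k + r - 1 = N * k + (r - 1) by omega,
      show N * k + r + 1 = N * (k + 1) + 0 by ring, (hdm k (r - 1) (by omega)).1,
      (hdm k (r - 1) (by omega)).2, (hdm (k + 1) 0 (by omega)).1, (hdm (k + 1) 0 (by omega)).2,
      hXn]
    linear_combination ρ ^ k * hjunction

def periodicKernel {n : ℕ} (x : Fin n → ℂ) (ρ : ℂ) (i : ℕ) : ℂ :=
  ρ ^ (i / (n + 1)) * finExtend x 0 (i % (n + 1))

theorem periodicKernel_val {n : ℕ} (x : Fin n → ℂ) (ρ : ℂ) (i : Fin n) :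
    periodicKernel x ρ i = x i := by
  have hi : (i : ℕ) < n + 1 := Nat.lt_succ_of_lt i.isLt
  rw [periodicKernel, Nat.div_eq_of_lt hi, Nat.mod_eq_of_lt hi, finExtend_of_lt _ _ i.isLt,
    pow_zero, one_mul]

theorem norm_periodicKernel_le {n : ℕ} (x : Fin n → ℂ) (ρ : ℂ) (i : ℕ) :
    ‖periodicKernel x ρ i‖ ≤ ‖ρ‖ ^ (i / (n + 1)) * ‖x‖ := by
  rw [periodicKernel, norm_mul, norm_pow]
  exact mul_le_mul_of_nonneg_left (norm_finExtend_zero_le x _) (by positivity)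

theorem summable_pow_div {q : ℝ} (hq0 : 0 ≤ q) (hq1 : q < 1) {N : ℕ} (hN : 0 < N) :
    Summable fun i => q ^ (i / N) := by
  set r := q ^ ((N : ℝ)⁻¹)
  have hr0 : 0 ≤ r := Real.rpow_nonneg hq0 _
  have hr1 : r < 1 := Real.rpow_lt_one hq0 hq1 (by positivity)
  have hgeom : Summable fun i => r ^ (i - (N - 1)) :=
    (summable_nat_add_iff (N - 1)).1 (by simpa using summable_geometric_of_lt_one hr0 hr1)
  refine hgeom.of_nonneg_of_le (fun i => by positivity) fun i => ?_
  calc q ^ (i / N) = r ^ (N * (i / N)) := by rw [pow_mul, Real.rpow_inv_natCast_pow hq0 hN.ne']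
    _ ≤ r ^ (i - (N - 1)) := pow_le_pow_of_le_one hr0 hr1.le (by
        have := Nat.div_add_mod i N; have := Nat.mod_lt i hN; omega)

theorem exists_periodic_kernel {A B C : Set ℂ} {n : ℕ} {u v w x : Fin (n + 1) → ℂ}
    (hr : RangesIn A B C u v w) (hker : (JacobiMatrix u v w).mulVec x = 0) {a c ρ : ℂ}
    (ha : a ∈ A) (hc : c ∈ C) (hjunction : a * x (Fin.last n) + c * (ρ * x 0) = 0) :
    ∃ α β γ : ℕ → ℂ, RangesIn A B C α β γ ∧ ∀ i, tridiagRow α β γ (periodicKernel x ρ) i = 0 := by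
  -- the diagonal entry of a junction row meets a zero of the null sequence, so any will do
  set b := v 0
  refine ⟨fun i => finExtend u a (i % (n + 1 + 1)), fun i => finExtend v b (i % (n + 1 + 1)),
    fun i => finExtend w c (i % (n + 1 + 1)),
    ⟨fun i => finExtend_mem hr.1 ha _, fun i => finExtend_mem hr.2.1 (hr.2.1 _) _,
      fun i => finExtend_mem hr.2.2 hc _⟩, tridiagRow_periodic n.succ_pos (fun r hr => ?_) ?_ ?_⟩
  · rw [← jacobiMatrix_mulVec_apply u v w x a b c ⟨r, hr⟩, hker, Pi.zero_apply]
  · exact finExtend_of_le _ _ le_rfl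
  · rwa [finExtend_of_le _ _ le_rfl, finExtend_of_le _ _ le_rfl, finExtend_of_lt _ _ n.succ_pos,
      Nat.succ_sub_one, finExtend_of_lt _ _ n.lt_succ_self]

theorem norm_tridiagRow_le {u v w y : ℕ → ℂ} {R M : ℝ} (hu : ∀ i, ‖u i‖ ≤ R)
    (hv : ∀ i, ‖v i‖ ≤ R) (hw : ∀ i, ‖w i‖ ≤ R) (hy : ∀ i, ‖y i‖ ≤ M) (i : ℕ) :
    ‖tridiagRow u v w y i‖ ≤ 3 * R * M := by
  have hR : 0 ≤ R := (norm_nonneg _).trans (hu 0)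
  have hM : 0 ≤ M := (norm_nonneg _).trans (hy 0)
  have hsub : ‖(if i = 0 then 0 else u i * y (i - 1))‖ ≤ R * M := by
    split_ifs
    · rw [norm_zero]; positivity
    · rw [norm_mul]; exact mul_le_mul (hu i) (hy _) (norm_nonneg _) hR
  calc ‖tridiagRow u v w y i‖
      ≤ ‖(if i = 0 then 0 else u i * y (i - 1))‖ + ‖v i‖ * ‖y i‖ + ‖w i‖ * ‖y (i + 1)‖ := by
        rw [tridiagRow, ← norm_mul, ← norm_mul]; exact norm_add₃_le
    _ ≤ R * M + R * M + R * M := by gcongr <;> simp_all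
    _ = 3 * R * M := by ring

theorem exists_semiActs {u v w : ℕ → ℂ} {R : ℝ} (hu : ∀ i, ‖u i‖ ≤ R)
    (hv : ∀ i, ‖v i‖ ≤ R) (hw : ∀ i, ‖w i‖ ≤ R) :
    ∃ B : SeqN ∞ →L[ℂ] SeqN ∞, SemiActs B u v w := by
  have hbound (f : SeqN ∞) (i : ℕ) : ‖tridiagRow u v w f i‖ ≤ 3 * R * ‖f‖ :=
    norm_tridiagRow_le hu hv hw (lp.norm_apply_le_norm ENNReal.top_ne_zero f) i
  let L : SeqN ∞ →ₗ[ℂ] SeqN ∞ :=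
    { toFun := fun f => ⟨tridiagRow u v w f,
        memℓp_infty_iff.2 ⟨3 * R * ‖f‖, by rintro _ ⟨i, rfl⟩; exact hbound f i⟩⟩
      map_add' := fun f g => by
        ext i
        simp only [tridiagRow, lp.coeFn_add, Pi.add_apply]
        split_ifs <;> ring
      map_smul' := fun c f => by
        ext i
        simp only [tridiagRow, lp.coeFn_smul, Pi.smul_apply, smul_eq_mul, RingHom.id_apply]
        split_ifs <;> ring }
  refine ⟨L.mkContinuous (3 * R) fun f => ?_, fun f i => rfl⟩
  have hR : 0 ≤ R := (norm_nonneg _).trans (hu 0)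
  exact lp.norm_le_of_forall_le (by positivity) (hbound f)

theorem RangesIn.norm_le {U V W : Set ℂ} {R : ℝ} (hR : ∀ z ∈ U ∪ V ∪ W, ‖z‖ ≤ R)
    {u v w : ℕ → ℂ} (h : RangesIn U V W u v w) :
    (∀ i, ‖u i‖ ≤ R) ∧ (∀ i, ‖v i‖ ≤ R) ∧ (∀ i, ‖w i‖ ≤ R) :=
  ⟨fun i => hR _ (by simp [h.1 i]), fun i => hR _ (by simp [h.2.1 i]),
    fun i => hR _ (by simp [h.2.2 i])⟩

theorem AllMPlusInv.exists_isUnit_semiActs {U V W : Set ℂ} (hinv : AllMPlusInv U V W) {R : ℝ}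
    (hR : ∀ z ∈ U ∪ V ∪ W, ‖z‖ ≤ R) {u v w : ℕ → ℂ} (h : RangesIn U V W u v w) :
    ∃ B : SeqN ∞ →L[ℂ] SeqN ∞, IsUnit B ∧ SemiActs B u v w := by
  obtain ⟨hu, hv, hw⟩ := h.norm_le hR
  obtain ⟨B, hB⟩ := exists_semiActs hu hv hw
  exact ⟨B, hinv ∞ B ⟨u, v, w, h, hB⟩, hB⟩

theorem eq_zero_of_injective_of_tridiagRow_eq_zero {B : SeqN ∞ →L[ℂ] SeqN ∞}
    (hB : Function.Injective B) {u v w y : ℕ → ℂ} (hact : SemiActs B u v w) (hy : Memℓp y ∞)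
    (hrow : ∀ i, tridiagRow u v w y i = 0) : y = 0 := by
  have hBy : B ⟨y, hy⟩ = B 0 := by
    rw [map_zero]
    ext i
    exact (hact _ i).trans (hrow i)
  exact congrArg (fun f : SeqN ∞ => ⇑f) (hB hBy)

theorem hasSum_mul_tridiagRow_of_transpose {u v w u' w' z g : ℕ → ℂ} {R M : ℝ}
    (hu : ∀ i, ‖u i‖ ≤ R) (hv : ∀ i, ‖v i‖ ≤ R) (hw : ∀ i, ‖w i‖ ≤ R) (hg : ∀ i, ‖g i‖ ≤ M)
    (hu' : ∀ j, u' (j + 1) = w j) (hw' : ∀ j, w' j = u (j + 1))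
    (hz : Summable fun i => ‖z i‖) (hrow : ∀ j, tridiagRow u' v w' z j = 0) :
    HasSum (fun i => z i * tridiagRow u v w g i) 0 := by
  have hR : 0 ≤ R := (norm_nonneg _).trans (hu 0)
  have summable_of_le {d : ℕ → ℂ} (hd : ∀ i, ‖d i‖ ≤ R) (e : ℕ → ℕ) :
      Summable fun i => z i * (d i * g (e i)) := by
    refine Summable.of_norm_bounded (hz.mul_right (R * M)) fun i => ?_
    rw [norm_mul, norm_mul]
    exact mul_le_mul_of_nonneg_left (mul_le_mul (hd i) (hg _) (norm_nonneg _) hR) (norm_nonneg _)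
  set a : ℕ → ℂ := fun i => z i * ((if i = 0 then 0 else u i) * g (i - 1))
  set b : ℕ → ℂ := fun i => z i * (v i * g i)
  set c : ℕ → ℂ := fun i => z i * (w i * g (i + 1))
  obtain ⟨A, hA⟩ : Summable a := summable_of_le (fun i => by split_ifs <;> simp [hR, hu]) _
  obtain ⟨Bs, hBs⟩ : Summable b := summable_of_le hv id
  obtain ⟨C, hC⟩ : Summable c := summable_of_le hw (· + 1)
  have ha' : HasSum (fun j => a (j + 1)) A := by
    simpa [a] using (hasSum_nat_add_iff' 1).2 hA
  have hc' : HasSum (fun j => if j = 0 then 0 else c (j - 1)) C := by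
    rw [← hasSum_nat_add_iff' 1]
    simpa using hC
  -- regrouping the terms by the entry of `g` they contain gives the rows of the transpose
  have hcol : ∀ j, a (j + 1) + b j + (if j = 0 then 0 else c (j - 1)) =
      g j * tridiagRow u' v w' z j := by
    rintro (_ | j)
    · simp only [a, b, tridiagRow, hw', reduceIte, zero_add, one_ne_zero, Nat.sub_self]; ring
    · simp only [a, b, c, tridiagRow, hw', hu', reduceIte, Nat.add_one_ne_zero, Nat.add_sub_cancel]
      ring
  have hzero : A + Bs + C = 0 :=
    ((ha'.add hBs).add hc').unique (by simp [hcol, hrow, hasSum_zero])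
  rw [← hzero]
  convert (hA.add hBs).add hC using 2 with i
  simp only [a, b, c, tridiagRow]
  split_ifs <;> ring

/-- Pairing `z` with a preimage `g` of `e_k` gives `z k = ∑ z i (B g) i = 0`. -/
theorem eq_zero_of_surjective_of_transpose_tridiagRow_eq_zero {B : SeqN ∞ →L[ℂ] SeqN ∞}
    (hB : Function.Surjective B) {u v w : ℕ → ℂ} (hact : SemiActs B u v w) {R : ℝ}
    (hu : ∀ i, ‖u i‖ ≤ R) (hv : ∀ i, ‖v i‖ ≤ R) (hw : ∀ i, ‖w i‖ ≤ R) {u' w' z : ℕ → ℂ}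
    (hu' : ∀ j, u' (j + 1) = w j) (hw' : ∀ j, w' j = u (j + 1))
    (hz : Summable fun i => ‖z i‖) (hrow : ∀ j, tridiagRow u' v w' z j = 0) : z = 0 := by
  funext k
  obtain ⟨g, hg⟩ := hB (lp.single ∞ k 1)
  have hsum := hasSum_mul_tridiagRow_of_transpose hu hv hw
    (lp.norm_apply_le_norm ENNReal.top_ne_zero g) hu' hw' hz hrow
  have hterm : ∀ i, z i * tridiagRow u v w g i = if i = k then z k else 0 := fun i => by
    rw [show tridiagRow u v w g i = B g i from (hact g i).symm, hg, lp.single_apply,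
      Pi.single_apply]
    split_ifs with h <;> simp [h]
  simp only [hterm] at hsum
  exact (hasSum_ite_eq k (z k)).unique hsum

theorem jacobiMatrix_kernel_eq_zero_of_norm_le_one {U V W : Set ℂ} (hinv : AllMPlusInv U V W)
    {R : ℝ} (hR : ∀ z ∈ U ∪ V ∪ W, ‖z‖ ≤ R) {n : ℕ} {u v w x : Fin (n + 1) → ℂ}
    (hr : RangesIn U V W u v w) (hker : (JacobiMatrix u v w).mulVec x = 0) {a c ρ : ℂ}
    (ha : a ∈ U) (hc : c ∈ W) (hρ : ‖ρ‖ ≤ 1)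
    (hjunction : a * x (Fin.last n) + c * (ρ * x 0) = 0) : x = 0 := by
  obtain ⟨α, β, γ, hαβγ, hrow⟩ := exists_periodic_kernel hr hker ha hc hjunction
  obtain ⟨B, hB, hact⟩ := hinv.exists_isUnit_semiActs hR hαβγ
  have hbdd : Memℓp (periodicKernel x ρ) ∞ := by
    refine memℓp_infty_iff.2 ⟨‖x‖, ?_⟩
    rintro _ ⟨i, rfl⟩
    exact (norm_periodicKernel_le x ρ i).trans
      (mul_le_of_le_one_left (norm_nonneg _) (pow_le_one₀ (norm_nonneg _) hρ))
  have hy := eq_zero_of_injective_of_tridiagRow_eq_zero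
    (ContinuousLinearEquiv.unitsEquiv ℂ _ hB.unit).injective hact hbdd hrow
  funext i
  rw [← periodicKernel_val x ρ i, hy, Pi.zero_apply, Pi.zero_apply]

theorem jacobiMatrix_kernel_eq_zero_of_norm_lt_one {U V W : Set ℂ} (hinv : AllMPlusInv U V W)
    {R : ℝ} (hR : ∀ z ∈ U ∪ V ∪ W, ‖z‖ ≤ R) {n : ℕ} {u v w x : Fin (n + 1) → ℂ}
    (hr : RangesIn U V W u v w) (hker : (JacobiMatrix u v w).mulVec x = 0) {a c ρ : ℂ}
    (ha : a ∈ U) (hc : c ∈ W) (hρ : ‖ρ‖ < 1)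
    (hjunction : c * x 0 + a * (ρ * x (Fin.last n)) = 0) : x = 0 := by
  have hr' : RangesIn W V U (w ∘ Fin.rev) (v ∘ Fin.rev) (u ∘ Fin.rev) :=
    ⟨fun i => hr.2.2 _, fun i => hr.2.1 _, fun i => hr.1 _⟩
  obtain ⟨α, β, γ, hαβγ, hrow⟩ := exists_periodic_kernel hr' (jacobiMatrix_rev_mulVec_rev hker)
    hc ha (ρ := ρ) (by simpa using hjunction)
  have hαβγ' : RangesIn U V W (fun j => γ (j - 1)) β (fun j => α (j + 1)) :=
    ⟨fun j => hαβγ.2.2 _, hαβγ.2.1, fun j => hαβγ.1 _⟩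
  obtain ⟨B, hB, hact⟩ := hinv.exists_isUnit_semiActs hR hαβγ'
  obtain ⟨hu, hv, hw⟩ := hαβγ'.norm_le hR
  have hsum : Summable fun i => ‖periodicKernel (x ∘ Fin.rev) ρ i‖ :=
    ((summable_pow_div (norm_nonneg ρ) hρ (Nat.succ_pos _)).mul_right _).of_nonneg_of_le
      (fun i => norm_nonneg _) (norm_periodicKernel_le _ ρ)
  have hy := eq_zero_of_surjective_of_transpose_tridiagRow_eq_zero
    (ContinuousLinearEquiv.unitsEquiv ℂ _ hB.unit).surjective hact hu hv hw
    (fun j => rfl) (fun j => by simp) hsum hrow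
  funext i
  simpa [hy] using (periodicKernel_val (x ∘ Fin.rev) ρ (Fin.rev i)).symm

theorem statement6_general (U V W : Set ℂ)
    (hUne : U.Nonempty) (hUc : IsCompact U) (hVc : IsCompact V)
    (hWne : W.Nonempty) (hWc : IsCompact W)
    (hinv : AllMPlusInv U V W) :
    ∀ (n : ℕ) (u v w : Fin n → ℂ), RangesIn U V W u v w →
      IsUnit (JacobiMatrix u v w) := by
  intro n u v w hr
  rw [Matrix.isUnit_iff_isUnit_det, isUnit_iff_ne_zero]
  intro hdet
  obtain ⟨x, hx, hker⟩ := Matrix.exists_mulVec_eq_zero_iff.2 hdet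
  obtain ⟨n, rfl⟩ : ∃ m, n = m + 1 :=
    Nat.exists_eq_succ_of_ne_zero fun hn => hx (by subst hn; exact Subsingleton.elim _ _)
  obtain ⟨R, hR⟩ := ((hUc.union hVc).union hWc).isBounded.exists_norm_le
  obtain ⟨u₀, hu₀⟩ := hUne
  obtain ⟨w₀, hw₀⟩ := hWne
  by_cases h0U : (0 : ℂ) ∈ U
  · exact hx (jacobiMatrix_kernel_eq_zero_of_norm_le_one hinv hR hr hker h0U hw₀ (ρ := 0)
      (by simp) (by simp))
  by_cases h0W : (0 : ℂ) ∈ W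
  · exact hx (jacobiMatrix_kernel_eq_zero_of_norm_lt_one hinv hR hr hker hu₀ h0W (ρ := 0)
      (by simp) (by simp))
  have hx₀ : x 0 ≠ 0 :=
    head_ne_zero_of_jacobiMatrix_mulVec_eq_zero (fun i h => h0W (h ▸ hr.2.2 i)) hker hx
  have hx₁ : x (Fin.last n) ≠ 0 := by
    have hx' : x ∘ Fin.rev ≠ 0 := fun h =>
      hx (funext fun i => by simpa using congrFun h (Fin.rev i))
    simpa using head_ne_zero_of_jacobiMatrix_mulVec_eq_zero (fun i h => h0U (h ▸ hr.1 _))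
      (jacobiMatrix_rev_mulVec_rev hker) hx'
  have hu₀' : u₀ ≠ 0 := fun h => h0U (h ▸ hu₀)
  have hw₀' : w₀ ≠ 0 := fun h => h0W (h ▸ hw₀)
  obtain ⟨ρ, hρ_spec⟩ : ∃ ρ, w₀ * (ρ * x 0) = -(u₀ * x (Fin.last n)) :=
    ⟨-(u₀ * x (Fin.last n)) / (w₀ * x 0), by field_simp⟩
  rcases le_or_gt ‖ρ‖ 1 with hρ | hρ
  · exact hx (jacobiMatrix_kernel_eq_zero_of_norm_le_one hinv hR hr hker hu₀ hw₀ hρ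
      (by linear_combination hρ_spec))
  · have hρ0 : ρ ≠ 0 := by rintro rfl; simp_all
    exact hx (jacobiMatrix_kernel_eq_zero_of_norm_lt_one hinv hR hr hker hu₀ hw₀ (ρ := ρ⁻¹)
      (by rwa [norm_inv, inv_lt_one₀ (by positivity)]) (by field_simp; linear_combination hρ_spec))

/-- If all operators in `M₊(U,V,W)` are invertible then every finite
tridiagonal matrix over `(U,V,W)` is invertible. -/
theorem statement6 (U V W : Set ℂ)
    (hUne : U.Nonempty) (hUc : IsCompact U) (hVne : V.Nonempty) (hVc : IsCompact V)
    (hWne : W.Nonempty) (hWc : IsCompact W)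
    (hinv : AllMPlusInv U V W) :
    ∀ (n : ℕ) (u v w : Fin n → ℂ), RangesIn U V W u v w →
      IsUnit (JacobiMatrix u v w) :=
  statement6_general U V W hUne hUc hVc hWne hWc hinv
end

section
/- Let U, V, W be nonempty compact subsets of ℂ, let p ∈ [1,∞], let A ∈ PE(U,V,W) and let B ∈ M(U,V,W) be arbitrary. Then ‖A‖_p ≥ ‖B‖_p. If moreover (U,V,W) is compatible, then A and B are invertible and ‖A⁻¹‖_p ≥ ‖B⁻¹‖_p. -/
open scoped ENNReal

/-!
Pseudoergodicity says that every finite window of the diagonals of `B` reappears, to any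
accuracy, somewhere along the diagonals of `A`. So for finitely supported `x` there is a shift
`t` with `S₋ₜ A Sₜ x` arbitrarily close to `B x`, and since shifts are isometries this gives
`‖B x‖ ≤ ‖A‖ ‖x‖` and `‖x‖ ≤ ‖A⁻¹‖ ‖B x‖` on finitely supported vectors. For `p < ∞` both bounds
extend by density. For `p = ∞` the first extends because `(B x)ᵢ` only sees `x_{i-1}, xᵢ, x_{i+1}`;
for the second, multiply `x` by a tent of width `L` peaked at a near-maximal entry: the
commutator of `B` with the tent has norm `O(‖B‖ / L)`.
-/

open Filter Topology

lemma Memℓp.comp_equiv {α β E : Type*} [NormedAddCommGroup E] {p : ℝ≥0∞} {f : β → E}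
    (hf : Memℓp f p) (e : α ≃ β) : Memℓp (f ∘ e) p := by
  rcases p.trichotomy with rfl | rfl | hp
  · exact memℓp_zero (hf.finite_dsupport.preimage e.injective.injOn)
  · refine memℓp_infty ?_
    have : (fun a => ‖(f ∘ e) a‖) = (fun b => ‖f b‖) ∘ e := rfl
    rw [this, e.surjective.range_comp]
    exact hf.bddAbove
  · exact memℓp_gen ((e.summable_iff (f := fun b => ‖f b‖ ^ p.toReal)).mpr (hf.summable hp))

noncomputable section Sequences

variable {p : ℝ≥0∞}

lemma ne_zero_of_fact_one_le [Fact (1 ≤ p)] : p ≠ 0 :=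
  (zero_lt_one.trans_le Fact.out).ne'

def shiftSeq (t : ℤ) (x : SeqZ p) : SeqZ p :=
  ⟨fun i => x (i - t), (lp.memℓp x).comp_equiv (Equiv.subRight t)⟩

@[simp] lemma shiftSeq_apply (t : ℤ) (x : SeqZ p) (i : ℤ) : shiftSeq t x i = x (i - t) := rfl

lemma norm_shiftSeq [Fact (1 ≤ p)] (t : ℤ) (x : SeqZ p) : ‖shiftSeq t x‖ = ‖x‖ := by
  rcases p.dichotomy with rfl | hp
  · rw [lp.norm_eq_ciSup, lp.norm_eq_ciSup, iSup, iSup]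
    exact congrArg sSup ((Equiv.subRight t).surjective.range_comp fun i => ‖x i‖)
  · have hp0 : 0 < p.toReal := zero_lt_one.trans_le hp
    rw [lp.norm_eq_tsum_rpow hp0, lp.norm_eq_tsum_rpow hp0]
    exact congrArg (· ^ (1 / p.toReal))
      ((Equiv.subRight t).tsum_eq fun i => ‖x i‖ ^ p.toReal)

variable (p) in
def indicatorSeq (s : Finset ℤ) (g : ℤ → ℂ) : SeqZ p :=
  ∑ i ∈ s, lp.single p i (g i)

lemma indicatorSeq_apply (s : Finset ℤ) (g : ℤ → ℂ) (j : ℤ) :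
    indicatorSeq p s g j = if j ∈ s then g j else 0 := by
  simp only [indicatorSeq, lp.coeFn_sum, Finset.sum_apply, lp.coeFn_single, Finset.sum_pi_single]

lemma hasFiniteSupport_indicatorSeq (s : Finset ℤ) (g : ℤ → ℂ) :
    (⇑(indicatorSeq p s g)).HasFiniteSupport := by
  refine s.finite_toSet.subset fun j hj => ?_
  by_contra hjs
  rw [Finset.mem_coe] at hjs
  exact hj (by rw [indicatorSeq_apply, if_neg hjs])

lemma norm_indicatorSeq_le [Fact (1 ≤ p)] (s : Finset ℤ) (x : SeqZ p) :
    ‖indicatorSeq p s x‖ ≤ ‖x‖ :=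
  lp.norm_mono ne_zero_of_fact_one_le fun j => by
    rw [indicatorSeq_apply]
    split_ifs <;> simp

lemma norm_le_sum_norm_apply [Fact (1 ≤ p)] {x : SeqZ p} {s : Finset ℤ}
    (hx : ∀ i ∉ s, x i = 0) : ‖x‖ ≤ ∑ i ∈ s, ‖x i‖ := by
  have hxs : indicatorSeq p s x = x := lp.ext <| funext fun j => by
    rw [indicatorSeq_apply]
    split_ifs with hj
    · rfl
    · exact (hx j hj).symm
  calc ‖x‖ = ‖∑ i ∈ s, (lp.single p i (x i) : SeqZ p)‖ := by
        conv_lhs => rw [← hxs, indicatorSeq]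
    _ ≤ ∑ i ∈ s, ‖(lp.single p i (x i) : SeqZ p)‖ := norm_sum_le _ _
    _ = ∑ i ∈ s, ‖x i‖ := by
      simp only [lp.norm_single (pos_iff_ne_zero.mpr ne_zero_of_fact_one_le)]

lemma le_of_forall_hasFiniteSupport [Fact (1 ≤ p)] (hp : p ≠ ⊤) {f g : SeqZ p → ℝ}
    (hf : Continuous f) (hg : Continuous g)
    (h : ∀ x : SeqZ p, (⇑x).HasFiniteSupport → f x ≤ g x) (x : SeqZ p) : f x ≤ g x := by
  have hx := lp.hasSum_single hp x
  exact le_of_tendsto_of_tendsto' ((hf.tendsto x).comp hx) ((hg.tendsto x).comp hx)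
    fun s => h _ (hasFiniteSupport_indicatorSeq s x)

end Sequences

section Inverse

variable {𝕜 E : Type*} [NontriviallyNormedField 𝕜] [NormedAddCommGroup E] [NormedSpace 𝕜 E]
  {A : E →L[𝕜] E}

lemma norm_le_norm_inverse_mul_norm (hA : IsUnit A) (y : E) :
    ‖y‖ ≤ ‖Ring.inverse A‖ * ‖A y‖ := by
  calc ‖y‖ = ‖Ring.inverse A (A y)‖ := by
        rw [← mul_apply_eq_comp, Ring.inverse_mul_cancel A hA, one_apply_eq_self]
    _ ≤ ‖Ring.inverse A‖ * ‖A y‖ := (Ring.inverse A).le_opNorm _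

lemma norm_inverse_le_of_forall_norm_le (hA : IsUnit A) {c : ℝ} (hc : 0 ≤ c)
    (h : ∀ x, ‖x‖ ≤ c * ‖A x‖) : ‖Ring.inverse A‖ ≤ c :=
  (Ring.inverse A).opNorm_le_bound hc fun y => by
    simpa [← mul_apply_eq_comp, Ring.mul_inverse_cancel A hA] using h (Ring.inverse A y)

end Inverse

noncomputable def tent (c L r : ℝ) : ℝ := max 0 (1 - |r - c| / L)

section Tent

variable {c L : ℝ}

@[simp] lemma tent_self : tent c L c = 1 := by simp [tent]

lemma abs_tent_le_one (hL : 0 ≤ L) (r : ℝ) : |tent c L r| ≤ 1 := by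
  rw [tent, abs_of_nonneg (le_max_left _ _)]
  exact max_le zero_le_one (sub_le_self _ (by positivity))

lemma tent_eq_zero (hL : 0 < L) {r : ℝ} (h : L ≤ |r - c|) : tent c L r = 0 :=
  max_eq_left (sub_nonpos.mpr ((one_le_div hL).mpr h))

lemma abs_tent_sub_tent_le (hL : 0 < L) (r s : ℝ) : |tent c L r - tent c L s| ≤ |r - s| / L := by
  calc |tent c L r - tent c L s| ≤ |(1 - |r - c| / L) - (1 - |s - c| / L)| := by
        simp only [tent, max_comm (0 : ℝ)]
        exact abs_max_sub_max_le_abs _ _ _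
    _ = |(|s - c| - |r - c|)| / L := by
        rw [show (1 - |r - c| / L) - (1 - |s - c| / L) = (|s - c| - |r - c|) / L by ring,
          abs_div, abs_of_pos hL]
    _ ≤ |r - s| / L := by
        refine div_le_div_of_nonneg_right ?_ hL.le
        simpa [abs_sub_comm] using abs_abs_sub_abs_le_abs_sub (s - c) (r - c)

end Tent

lemma exists_tent_mul {p : ℝ≥0∞} (x : SeqZ p) (i : ℤ) {L : ℕ} (hL : 0 < L) :
    ∃ y : SeqZ p, (⇑y).HasFiniteSupport ∧ ∀ j, y j = (tent i L j : ℂ) * x j := by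
  refine ⟨indicatorSeq p (Finset.Icc (i - L) (i + L)) fun j => (tent i L j : ℂ) * x j,
    hasFiniteSupport_indicatorSeq _ _, fun j => ?_⟩
  rw [indicatorSeq_apply]
  split_ifs with hj
  · rfl
  · have hfar : (L : ℤ) ≤ |j - i| := by
      rw [Finset.mem_Icc] at hj
      rw [le_abs]
      omega
    rw [tent_eq_zero (by positivity) (by exact_mod_cast hfar), Complex.ofReal_zero, zero_mul]

lemma norm_apply_single_le {p : ℝ≥0∞} [Fact (1 ≤ p)] (B : SeqZ p →L[ℂ] SeqZ p) (i j : ℤ) :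
    ‖B (lp.single p j 1) i‖ ≤ ‖B‖ := by
  have hp : p ≠ 0 := ne_zero_of_fact_one_le
  calc ‖B (lp.single p j 1) i‖ ≤ ‖B (lp.single p j 1)‖ := lp.norm_apply_le_norm hp _ _
    _ ≤ ‖B‖ * ‖(lp.single p j 1 : SeqZ p)‖ := B.le_opNorm _
    _ = ‖B‖ := by rw [lp.norm_single (pos_iff_ne_zero.mpr hp), norm_one, mul_one]

namespace BiActs

variable {u v w : ℤ → ℂ}

section

variable {p : ℝ≥0∞} [Fact (1 ≤ p)] {B : SeqZ p →L[ℂ] SeqZ p}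

lemma apply_eq_of_eq (hB : BiActs B u v w) {x y : SeqZ p} {i : ℤ} (h₁ : x (i - 1) = y (i - 1))
    (h₂ : x i = y i) (h₃ : x (i + 1) = y (i + 1)) : B x i = B y i := by
  rw [hB, hB, h₁, h₂, h₃]

lemma apply_of_eq_mul (hB : BiActs B u v w) {x y : SeqZ p} {φ : ℤ → ℂ}
    (hy : ∀ j, y j = φ j * x j) (i : ℤ) :
    B y i = φ i * B x i + u i * (φ (i - 1) - φ i) * x (i - 1) +
      w i * (φ (i + 1) - φ i) * x (i + 1) := by
  rw [hB, hB, hy, hy, hy]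
  ring

lemma norm_lower_le (hB : BiActs B u v w) (i : ℤ) : ‖u i‖ ≤ ‖B‖ := by
  have h : i + 1 ≠ i - 1 := by omega
  simpa [hB _ i, lp.single_apply, Pi.single_apply, h] using norm_apply_single_le B i (i - 1)

lemma norm_upper_le (hB : BiActs B u v w) (i : ℤ) : ‖w i‖ ≤ ‖B‖ := by
  have h : i - 1 ≠ i + 1 := by omega
  simpa [hB _ i, lp.single_apply, Pi.single_apply, h] using norm_apply_single_le B i (i + 1)

end

section Top

variable {B : SeqZ ⊤ →L[ℂ] SeqZ ⊤}

lemma norm_apply_cutoff_le (hB : BiActs B u v w) {x y : SeqZ ⊤} {φ : ℤ → ℝ}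
    (hy : ∀ j, y j = φ j * x j) (hφ : ∀ j, |φ j| ≤ 1) {δ : ℝ}
    (hδ : ∀ j, |φ (j + 1) - φ j| ≤ δ) : ‖B y‖ ≤ ‖B x‖ + 2 * ‖B‖ * δ * ‖x‖ := by
  have hδ0 : 0 ≤ δ := (abs_nonneg _).trans (hδ 0)
  have hx : ∀ j, ‖x j‖ ≤ ‖x‖ := lp.norm_apply_le_norm ENNReal.top_ne_zero x
  refine lp.norm_le_of_forall_le (by positivity) fun i => ?_
  rw [hB.apply_of_eq_mul (φ := fun j => (φ j : ℂ)) hy i]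
  have h₁ : ‖(φ i : ℂ) * B x i‖ ≤ ‖B x‖ := by
    rw [norm_mul, Complex.norm_real, Real.norm_eq_abs]
    exact (mul_le_of_le_one_left (norm_nonneg _) (hφ i)).trans
      (lp.norm_apply_le_norm ENNReal.top_ne_zero _ _)
  have h₂ : ‖u i * ((φ (i - 1) : ℂ) - φ i) * x (i - 1)‖ ≤ ‖B‖ * δ * ‖x‖ := by
    have hstep := hδ (i - 1)
    rw [sub_add_cancel, abs_sub_comm] at hstep
    rw [norm_mul, norm_mul, ← Complex.ofReal_sub, Complex.norm_real, Real.norm_eq_abs]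
    gcongr
    exacts [hB.norm_lower_le i, hx _]
  have h₃ : ‖w i * ((φ (i + 1) : ℂ) - φ i) * x (i + 1)‖ ≤ ‖B‖ * δ * ‖x‖ := by
    rw [norm_mul, norm_mul, ← Complex.ofReal_sub, Complex.norm_real, Real.norm_eq_abs]
    gcongr
    exacts [hB.norm_upper_le i, hδ i, hx _]
  calc _ ≤ ‖(φ i : ℂ) * B x i‖ + ‖u i * ((φ (i - 1) : ℂ) - φ i) * x (i - 1)‖ +
        ‖w i * ((φ (i + 1) : ℂ) - φ i) * x (i + 1)‖ := norm_add₃_le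
    _ ≤ ‖B x‖ + ‖B‖ * δ * ‖x‖ + ‖B‖ * δ * ‖x‖ := by gcongr
    _ = ‖B x‖ + 2 * ‖B‖ * δ * ‖x‖ := by ring

lemma opNorm_le_of_hasFiniteSupport_top (hB : BiActs B u v w) {c : ℝ} (hc : 0 ≤ c)
    (h : ∀ y : SeqZ ⊤, (⇑y).HasFiniteSupport → ‖B y‖ ≤ c * ‖y‖) : ‖B‖ ≤ c :=
  B.opNorm_le_bound hc fun x => lp.norm_le_of_forall_le (by positivity) fun i => by
    set y := indicatorSeq ⊤ (Finset.Icc (i - 1) (i + 1)) x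
    have hy : ∀ j, i - 1 ≤ j → j ≤ i + 1 → x j = y j := fun j h₁ h₂ => by
      rw [indicatorSeq_apply, if_pos (Finset.mem_Icc.2 ⟨h₁, h₂⟩)]
    have hBy : B x i = B y i := hB.apply_eq_of_eq (hy _ (by omega) (by omega))
      (hy _ (by omega) (by omega)) (hy _ (by omega) (by omega))
    calc ‖B x i‖ = ‖B y i‖ := by rw [hBy]
      _ ≤ ‖B y‖ := lp.norm_apply_le_norm ENNReal.top_ne_zero _ _
      _ ≤ c * ‖y‖ := h y (hasFiniteSupport_indicatorSeq _ _)
      _ ≤ c * ‖x‖ := by gcongr; exact norm_indicatorSeq_le _ _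

lemma norm_le_of_hasFiniteSupport_top (hB : BiActs B u v w) {c : ℝ} (hc : 0 ≤ c)
    (h : ∀ y : SeqZ ⊤, (⇑y).HasFiniteSupport → ‖y‖ ≤ c * ‖B y‖) (x : SeqZ ⊤) :
    ‖x‖ ≤ c * ‖B x‖ := by
  have hcut : ∀ L : ℕ, 0 < L → ‖x‖ ≤ c * (‖B x‖ + 2 * ‖B‖ * (1 / L) * ‖x‖) := by
    intro L hL
    refine lp.norm_le_of_forall_le (by positivity) fun i => ?_
    obtain ⟨y, hyfin, hy⟩ := exists_tent_mul x i hL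
    have hLpos : (0 : ℝ) < L := by exact_mod_cast hL
    have hstep : ∀ j : ℤ, |tent i L (j + 1 : ℤ) - tent i L j| ≤ 1 / L := fun j => by
      simpa using abs_tent_sub_tent_le (c := i) hLpos (j + 1 : ℤ) j
    calc ‖x i‖ = ‖y i‖ := by simp [hy]
      _ ≤ ‖y‖ := lp.norm_apply_le_norm ENNReal.top_ne_zero _ _
      _ ≤ c * ‖B y‖ := h y hyfin
      _ ≤ c * (‖B x‖ + 2 * ‖B‖ * (1 / L) * ‖x‖) := by
        gcongr
        exact hB.norm_apply_cutoff_le hy (fun j => abs_tent_le_one hLpos.le _) hstep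
  have hlim : Tendsto (fun L : ℕ => c * (‖B x‖ + 2 * ‖B‖ * (1 / L) * ‖x‖)) atTop
      (𝓝 (c * ‖B x‖)) := by
    simpa using ((((tendsto_const_div_atTop_nhds_zero_nat (1 : ℝ)).const_mul (2 * ‖B‖)).mul_const
      ‖x‖).const_add ‖B x‖).const_mul c
  exact ge_of_tendsto hlim (eventually_atTop.2 ⟨1, fun L hL => hcut L hL⟩)

end Top

variable {p : ℝ≥0∞} [Fact (1 ≤ p)] {B : SeqZ p →L[ℂ] SeqZ p}

lemma opNorm_le_of_hasFiniteSupport (hB : BiActs B u v w) {c : ℝ} (hc : 0 ≤ c)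
    (h : ∀ y : SeqZ p, (⇑y).HasFiniteSupport → ‖B y‖ ≤ c * ‖y‖) : ‖B‖ ≤ c := by
  rcases eq_or_ne p ⊤ with rfl | hp
  · exact hB.opNorm_le_of_hasFiniteSupport_top hc h
  · exact B.opNorm_le_bound hc <| le_of_forall_hasFiniteSupport hp
      (continuous_norm.comp B.continuous) (continuous_const.mul continuous_norm) h

lemma norm_le_of_hasFiniteSupport (hB : BiActs B u v w) {c : ℝ} (hc : 0 ≤ c)
    (h : ∀ y : SeqZ p, (⇑y).HasFiniteSupport → ‖y‖ ≤ c * ‖B y‖) (x : SeqZ p) :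
    ‖x‖ ≤ c * ‖B x‖ := by
  rcases eq_or_ne p ⊤ with rfl | hp
  · exact hB.norm_le_of_hasFiniteSupport_top hc h x
  · exact le_of_forall_hasFiniteSupport hp continuous_norm
      (continuous_const.mul (continuous_norm.comp B.continuous)) h x

end BiActs

section Pseudoergodic

variable {U V W : Set ℂ} {uA vA wA uB vB wB : ℤ → ℂ}

lemma PseudoergodicZ.exists_shift_close (hpe : PseudoergodicZ U V W uA vA wA)
    (hr : RangesIn U V W uB vB wB) (m : ℤ) (n : ℕ) {δ : ℝ} (hδ : 0 < δ) :
    ∃ t : ℤ, ∀ i, m ≤ i → i < m + n →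
      ‖uA (i + t) - uB i‖ < δ ∧ ‖vA (i + t) - vB i‖ < δ ∧ ‖wA (i + t) - wB i‖ < δ := by
  obtain ⟨k, hk⟩ := hpe n (fun j => uB (m + j)) (fun j => vB (m + j)) (fun j => wB (m + j))
    ⟨fun _ => hr.1 _, fun _ => hr.2.1 _, fun _ => hr.2.2 _⟩ δ hδ
  refine ⟨k - m, fun i hi₁ hi₂ => ?_⟩
  have hj : ((i - m).toNat : ℤ) = i - m := Int.toNat_of_nonneg (by omega)
  have hi := hk ⟨(i - m).toNat, by omega⟩
  simp only [hj, add_sub_cancel] at hi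
  rwa [show i + (k - m) = k + (i - m) by ring]

variable {p : ℝ≥0∞} [Fact (1 ≤ p)] {A B : SeqZ p →L[ℂ] SeqZ p}

lemma BiActs.shiftSeq_conj_sub_apply (hA : BiActs A uA vA wA) (hB : BiActs B uB vB wB)
    (t : ℤ) (x : SeqZ p) (i : ℤ) :
    (shiftSeq (-t) (A (shiftSeq t x)) - B x) i =
      (uA (i + t) - uB i) * x (i - 1) + (vA (i + t) - vB i) * x i +
        (wA (i + t) - wB i) * x (i + 1) := by
  rw [lp.coeFn_sub, Pi.sub_apply, shiftSeq_apply, sub_neg_eq_add, hA, hB]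
  simp only [shiftSeq_apply, add_sub_cancel_right, show i + t - 1 - t = i - 1 by ring,
    show i + t + 1 - t = i + 1 by ring]
  ring

lemma PseudoergodicZ.exists_shiftSeq_conj_near (hpe : PseudoergodicZ U V W uA vA wA)
    (hr : RangesIn U V W uB vB wB) (hA : BiActs A uA vA wA) (hB : BiActs B uB vB wB)
    {x : SeqZ p} (hx : (⇑x).HasFiniteSupport) {ε : ℝ} (hε : 0 < ε) :
    ∃ t : ℤ, ‖shiftSeq (-t) (A (shiftSeq t x)) - B x‖ ≤ ε := by
  obtain ⟨N, hN⟩ := (hx.image Int.natAbs).bddAbove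
  have hxz : ∀ i, N < i.natAbs → x i = 0 := fun i hi => by
    by_contra h
    exact hi.not_ge (hN ⟨i, h, rfl⟩)
  have hx : ∀ j, ‖x j‖ ≤ ‖x‖ := lp.norm_apply_le_norm ne_zero_of_fact_one_le x
  set n : ℕ := 2 * N + 3
  set δ : ℝ := ε / (3 * n * (‖x‖ + 1))
  obtain ⟨t, ht⟩ := hpe.exists_shift_close hr (-N - 1) n (by positivity : 0 < δ)
  refine ⟨t, ?_⟩
  set D := shiftSeq (-t) (A (shiftSeq t x)) - B x
  set window := Finset.Ico (-N - 1 : ℤ) (-N - 1 + n)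
  have hD_zero : ∀ i ∉ window, D i = 0 := fun i hi => by
    rw [Finset.mem_Ico] at hi
    rw [hA.shiftSeq_conj_sub_apply hB, hxz (i - 1) (by omega), hxz i (by omega),
      hxz (i + 1) (by omega)]
    ring
  have hD_le : ∀ i ∈ window, ‖D i‖ ≤ 3 * δ * ‖x‖ := fun i hi => by
    rw [Finset.mem_Ico] at hi
    obtain ⟨hu, hv, hw⟩ := ht i hi.1 hi.2
    have hterm : ∀ a b : ℂ, ‖a‖ < δ → ‖b‖ ≤ ‖x‖ → ‖a * b‖ ≤ δ * ‖x‖ := fun a b ha hb => by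
      rw [norm_mul]
      exact mul_le_mul ha.le hb (norm_nonneg _) (by positivity)
    rw [hA.shiftSeq_conj_sub_apply hB]
    calc _ ≤ ‖(uA (i + t) - uB i) * x (i - 1)‖ + ‖(vA (i + t) - vB i) * x i‖ +
          ‖(wA (i + t) - wB i) * x (i + 1)‖ := norm_add₃_le
      _ ≤ δ * ‖x‖ + δ * ‖x‖ + δ * ‖x‖ :=
          add_le_add (add_le_add (hterm _ _ hu (hx _)) (hterm _ _ hv (hx _))) (hterm _ _ hw (hx _))
      _ = 3 * δ * ‖x‖ := by ring
  calc ‖D‖ ≤ ∑ i ∈ window, ‖D i‖ := norm_le_sum_norm_apply hD_zero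
    _ ≤ ∑ _i ∈ window, 3 * δ * ‖x‖ := Finset.sum_le_sum hD_le
    _ = ε * (‖x‖ / (‖x‖ + 1)) := by
        simp only [window, Finset.sum_const, Int.card_Ico, add_sub_cancel_left,
          Int.toNat_natCast, nsmul_eq_mul, δ]
        have hn : (n : ℝ) ≠ 0 := by positivity
        field_simp
    _ ≤ ε := mul_le_of_le_one_right hε.le ((div_le_one (by positivity)).2 (by linarith))

end Pseudoergodic

namespace MemPE

variable {U V W : Set ℂ} {p : ℝ≥0∞} [Fact (1 ≤ p)] {A B : SeqZ p →L[ℂ] SeqZ p}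

lemma memM (hA : MemPE U V W A) : MemM U V W A :=
  let ⟨u, v, w, hr, _, hact⟩ := hA
  ⟨u, v, w, hr, hact⟩

lemma exists_shiftSeq_conj_near (hA : MemPE U V W A) (hB : MemM U V W B) {x : SeqZ p}
    (hx : (⇑x).HasFiniteSupport) {ε : ℝ} (hε : 0 < ε) :
    ∃ t : ℤ, ‖shiftSeq (-t) (A (shiftSeq t x)) - B x‖ ≤ ε := by
  obtain ⟨uA, vA, wA, -, hpe, hAact⟩ := hA
  obtain ⟨uB, vB, wB, hr, hBact⟩ := hB
  exact hpe.exists_shiftSeq_conj_near hr hAact hBact hx hε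

lemma norm_apply_le (hA : MemPE U V W A) (hB : MemM U V W B) {x : SeqZ p}
    (hx : (⇑x).HasFiniteSupport) : ‖B x‖ ≤ ‖A‖ * ‖x‖ := by
  refine le_of_forall_pos_le_add fun ε hε => ?_
  obtain ⟨t, ht⟩ := hA.exists_shiftSeq_conj_near hB hx hε
  calc ‖B x‖ ≤ ‖shiftSeq (-t) (A (shiftSeq t x))‖ + ε :=
        (norm_le_norm_add_norm_sub _ _).trans (by gcongr)
    _ ≤ ‖A‖ * ‖x‖ + ε := by
        rw [norm_shiftSeq]
        simpa [norm_shiftSeq] using A.le_opNorm (shiftSeq t x)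

lemma norm_le_norm_inverse_mul (hA : MemPE U V W A) (hB : MemM U V W B) (hAu : IsUnit A)
    {x : SeqZ p} (hx : (⇑x).HasFiniteSupport) : ‖x‖ ≤ ‖Ring.inverse A‖ * ‖B x‖ := by
  set c := ‖Ring.inverse A‖
  refine le_of_forall_pos_le_add fun ε hε => ?_
  obtain ⟨t, ht⟩ := hA.exists_shiftSeq_conj_near hB hx (by positivity : 0 < ε / (c + 1))
  calc ‖x‖ = ‖shiftSeq t x‖ := (norm_shiftSeq t x).symm
    _ ≤ c * ‖A (shiftSeq t x)‖ := norm_le_norm_inverse_mul_norm hAu _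
    _ = c * ‖shiftSeq (-t) (A (shiftSeq t x))‖ := by rw [norm_shiftSeq]
    _ ≤ c * (‖B x‖ + ε / (c + 1)) := by
        gcongr
        exact (norm_le_norm_add_norm_sub' _ _).trans (by gcongr)
    _ ≤ c * ‖B x‖ + ε := by
        rw [mul_add, mul_div_assoc']
        gcongr
        exact (div_le_iff₀ (by positivity)).2 (by nlinarith)

end MemPE

theorem statement7_general (U V W : Set ℂ)
    (p : ℝ≥0∞) [Fact (1 ≤ p)]
    (A B : SeqZ p →L[ℂ] SeqZ p) (hA : MemPE U V W A) (hB : MemM U V W B) :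
    ‖B‖ ≤ ‖A‖ ∧
    (Compatible U V W →
      IsUnit A ∧ IsUnit B ∧ ‖Ring.inverse B‖ ≤ ‖Ring.inverse A‖) := by
  have ⟨uB, vB, wB, _, hBact⟩ := hB
  refine ⟨hBact.opNorm_le_of_hasFiniteSupport (norm_nonneg A)
    fun x hx => hA.norm_apply_le hB hx, fun hc => ?_⟩
  have hAu : IsUnit A := hc p A hA.memM
  have hBu : IsUnit B := hc p B hB
  refine ⟨hAu, hBu, norm_inverse_le_of_forall_norm_le hBu (norm_nonneg _) ?_⟩
  exact hBact.norm_le_of_hasFiniteSupport (norm_nonneg _)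
    fun x hx => hA.norm_le_norm_inverse_mul hB hAu hx

/-- For `A ∈ PE(U,V,W)` and any `B ∈ M(U,V,W)`: `‖A‖_p ≥ ‖B‖_p`, and if
`(U,V,W)` is compatible then `A`, `B` are invertible with `‖A⁻¹‖_p ≥ ‖B⁻¹‖_p`. -/
theorem statement7 (U V W : Set ℂ)
    (hUne : U.Nonempty) (hUc : IsCompact U) (hVne : V.Nonempty) (hVc : IsCompact V)
    (hWne : W.Nonempty) (hWc : IsCompact W)
    (p : ℝ≥0∞) [Fact (1 ≤ p)]
    (A B : SeqZ p →L[ℂ] SeqZ p) (hA : MemPE U V W A) (hB : MemM U V W B) :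
    ‖B‖ ≤ ‖A‖ ∧
    (Compatible U V W →
      IsUnit A ∧ IsUnit B ∧ ‖Ring.inverse B‖ ≤ ‖Ring.inverse A‖) :=
  statement7_general U V W p A B hA hB
end
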